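/- arXiv:2106.03524 — 4 statements merged into one kernel-verified Lean document; each statement's English description precedes it below -/
import Mathlib

section
/- Let x ∈ ℝ^d with x ≠ 0, h ∈ ℝ^d with h_j > 0, and let Q_h(x) be the quantization with varying steps whose coordinates are independent with [Q_h(x)]_j = ‖x‖ · sign(x_j) · ξ_j(|x_j|/‖x‖), where ξ_j is unbiased stochastic rounding to the grid {0, h_j, 2h_j, …}. Then for any symmetric positive semidefinite matrix 𝐋, E[‖Q_h(x) − x‖²_𝐋] ≤ min(Σ_j 𝐋_{jj} h_j², √(Σ_j 𝐋_{jj}² h_j²)) · ‖x‖². In particular ℒ(Q_h, 𝐋) ≤ ‖diag(𝐋) h‖. -/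
open Matrix MeasureTheory ProbabilityTheory BigOperators

/-!
Write `Q_h(x) - x = c ⊙ (ξ - v)` with `c_j = ‖x‖ sign x_j`. The coordinates of `ξ - v` are
independent and centred, so the expectation of the quadratic form only sees the diagonal of `L`:
`E‖Q_h(x) - x‖²_L = Σ_j L_jj c_j² Var ξ_j`. Unbiased rounding of `v_j` to the neighbouring grid
points `a ≤ v_j < a + h_j` has variance `(v_j - a)(a + h_j - v_j)`, which is at most `h_j²` and at
most `h_j v_j`. Since `c_j² ≤ ‖x‖²` and `Σ_j v_j² = 1`, Cauchy–Schwarz turns the second bound into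
`√(Σ_j L_jj² h_j²)`.
-/

noncomputable def roundingVariance (h v : ℝ) : ℝ := (v - ⌊v / h⌋₊ * h) * ((⌊v / h⌋₊ + 1) * h - v)

section

variable {h v : ℝ}

theorem floor_div_mul_le (hh : 0 < h) (hv : 0 ≤ v) : ⌊v / h⌋₊ * h ≤ v :=
  (le_div_iff₀ hh).1 (Nat.floor_le (div_nonneg hv hh.le))

theorem lt_floor_div_add_one_mul (hh : 0 < h) : v < (⌊v / h⌋₊ + 1) * h :=
  (div_lt_iff₀ hh).1 (Nat.lt_floor_add_one _)

theorem roundingVariance_nonneg (hh : 0 < h) (hv : 0 ≤ v) : 0 ≤ roundingVariance h v :=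
  mul_nonneg (sub_nonneg.2 (floor_div_mul_le hh hv)) (sub_nonneg.2 (lt_floor_div_add_one_mul hh).le)

theorem roundingVariance_le_sq (hh : 0 < h) (hv : 0 ≤ v) : roundingVariance h v ≤ h ^ 2 := by
  have := floor_div_mul_le hh hv
  have := lt_floor_div_add_one_mul hh (v := v)
  rw [sq]
  exact mul_le_mul (by linarith) (by linarith) (by linarith) hh.le

theorem roundingVariance_le_mul (hh : 0 < h) (hv : 0 ≤ v) : roundingVariance h v ≤ h * v := by
  have := floor_div_mul_le hh hv
  have := lt_floor_div_add_one_mul hh (v := v)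
  have : (0 : ℝ) ≤ ⌊v / h⌋₊ * h := by positivity
  rw [mul_comm h]
  exact mul_le_mul (by linarith) (by linarith) (by linarith) hv

end

section

variable {Ω : Type*} [MeasurableSpace Ω] {μ : Measure Ω}

theorem integral_comp_of_two_point [IsProbabilityMeasure μ] {ξ : Ω → ℝ} (hξ : Measurable ξ)
    {a b pa pb : ℝ} (hab : a ≠ b) (hpa : 0 ≤ pa) (hpb : 0 ≤ pb) (hsum : pa + pb = 1)
    (ha : μ {ω | ξ ω = a} = ENNReal.ofReal pa) (hb : μ {ω | ξ ω = b} = ENNReal.ofReal pb)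
    (F : ℝ → ℝ) :
    Integrable (fun ω => F (ξ ω)) μ ∧ ∫ ω, F (ξ ω) ∂μ = pa * F a + pb * F b := by
  set A := {ω | ξ ω = a}
  set B := {ω | ξ ω = b}
  have hA : MeasurableSet A := hξ (measurableSet_singleton a)
  have hB : MeasurableSet B := hξ (measurableSet_singleton b)
  have hAB : Disjoint A B := Set.disjoint_left.2 fun ω (h₁ : ξ ω = a) h₂ => hab (h₁ ▸ h₂)
  have hae : ∀ᵐ ω ∂μ, ω ∈ A ∪ B := by
    rw [ae_iff, ← Set.compl_def, prob_compl_eq_zero_iff (hA.union hB), measure_union hAB hB,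
      ha, hb, ← ENNReal.ofReal_add hpa hpb, hsum, ENNReal.ofReal_one]
  have hF : (fun ω => F (ξ ω)) =ᵐ[μ] A.indicator (fun _ => F a) + B.indicator (fun _ => F b) := by
    filter_upwards [hae] with ω hω
    rcases hω with hωa | hωb
    · simp [Set.indicator_of_mem hωa, Set.indicator_of_notMem (Set.disjoint_left.1 hAB hωa),
        show ξ ω = a from hωa]
    · simp [Set.indicator_of_mem hωb, Set.indicator_of_notMem (Set.disjoint_right.1 hAB hωb),
        show ξ ω = b from hωb]
  have hiA := (integrable_const (F a)).indicator (μ := μ) hA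
  have hiB := (integrable_const (F b)).indicator (μ := μ) hB
  refine ⟨(hiA.add hiB).congr hF.symm, ?_⟩
  rw [integral_congr_ae hF, integral_add' hiA hiB, integral_indicator_const _ hA,
    integral_indicator_const _ hB, measureReal_def, measureReal_def, ha, hb,
    ENNReal.toReal_ofReal hpa, ENNReal.toReal_ofReal hpb, smul_eq_mul, smul_eq_mul]

theorem ProbabilityTheory.iIndepFun.integral_mul_eq_ite {ι : Type*} [DecidableEq ι]
    {Y : ι → Ω → ℝ} (hind : iIndepFun Y μ) (hY : ∀ i, MemLp (Y i) 2 μ)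
    (hmean : ∀ i, ∫ ω, Y i ω ∂μ = 0) (i j : ι) :
    ∫ ω, Y i ω * Y j ω ∂μ = if i = j then ∫ ω, Y i ω ^ 2 ∂μ else 0 := by
  split_ifs with hij
  · simp_rw [hij, sq]
  · rw [(hind.indepFun hij).integral_fun_mul_eq_mul_integral (hY i).aestronglyMeasurable
      (hY j).aestronglyMeasurable, hmean i, zero_mul]

theorem ProbabilityTheory.iIndepFun.integral_dotProduct_mulVec {ι : Type*} [Fintype ι]
    {Y : ι → Ω → ℝ} (hind : iIndepFun Y μ) (hY : ∀ i, MemLp (Y i) 2 μ)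
    (hmean : ∀ i, ∫ ω, Y i ω ∂μ = 0) (A : Matrix ι ι ℝ) :
    ∫ ω, (fun i => Y i ω) ⬝ᵥ A *ᵥ (fun i => Y i ω) ∂μ = ∑ i, A i i * ∫ ω, Y i ω ^ 2 ∂μ := by
  classical
  have hint : ∀ i j, Integrable (fun ω => A i j * (Y i ω * Y j ω)) μ := fun i j =>
    ((hY i).integrable_mul (hY j)).const_mul _
  have hexpand : ∀ ω, (fun i => Y i ω) ⬝ᵥ A *ᵥ (fun i => Y i ω) =
      ∑ i, ∑ j, A i j * (Y i ω * Y j ω) := fun ω => by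
    simp only [dotProduct, mulVec, Finset.mul_sum]
    exact Finset.sum_congr rfl fun i _ => Finset.sum_congr rfl fun j _ => by ring
  simp_rw [hexpand]
  rw [integral_finsetSum _ fun i _ => integrable_finsetSum _ fun j _ => hint i j]
  refine Finset.sum_congr rfl fun i _ => ?_
  simp_rw [integral_finsetSum _ fun j _ => hint i j, integral_const_mul,
    hind.integral_mul_eq_ite hY hmean, mul_ite, mul_zero, Finset.sum_ite_eq, Finset.mem_univ,
    if_true]

structure IsStochasticRounding (μ : Measure Ω) (ξ : Ω → ℝ) (h v : ℝ) : Prop where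
  measurable : Measurable ξ
  measure_eq_floor : μ {ω | ξ ω = ⌊v / h⌋₊ * h} = ENNReal.ofReal (⌊v / h⌋₊ + 1 - v / h)
  measure_eq_floor_add_one :
    μ {ω | ξ ω = (⌊v / h⌋₊ + 1) * h} = ENNReal.ofReal (v / h - ⌊v / h⌋₊)

variable {h v : ℝ}

namespace IsStochasticRounding

variable [IsProbabilityMeasure μ] {ξ : Ω → ℝ} (hξ : IsStochasticRounding μ ξ h v) (hh : 0 < h)
  (hv : 0 ≤ v)
include hξ hh hv

theorem integral_comp (F : ℝ → ℝ) :
    Integrable (fun ω => F (ξ ω)) μ ∧ ∫ ω, F (ξ ω) ∂μ =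
      (⌊v / h⌋₊ + 1 - v / h) * F (⌊v / h⌋₊ * h) + (v / h - ⌊v / h⌋₊) * F ((⌊v / h⌋₊ + 1) * h) :=
  integral_comp_of_two_point hξ.measurable (by nlinarith)
    (by linarith [Nat.lt_floor_add_one (v / h)]) (by linarith [Nat.floor_le (div_nonneg hv hh.le)])
    (by ring) hξ.measure_eq_floor hξ.measure_eq_floor_add_one F

theorem memLp_mul_sub (c : ℝ) : MemLp (fun ω => c * (ξ ω - v)) 2 μ :=
  (memLp_two_iff_integrable_sq ((hξ.measurable.sub_const v).const_mul c).aestronglyMeasurable).2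
    (hξ.integral_comp hh hv fun t => (c * (t - v)) ^ 2).1

theorem integral_mul_sub (c : ℝ) : ∫ ω, c * (ξ ω - v) ∂μ = 0 := by
  rw [(hξ.integral_comp hh hv fun t => c * (t - v)).2]
  field_simp
  ring

theorem integral_mul_sub_sq (c : ℝ) :
    ∫ ω, (c * (ξ ω - v)) ^ 2 ∂μ = c ^ 2 * roundingVariance h v := by
  rw [(hξ.integral_comp hh hv fun t => (c * (t - v)) ^ 2).2, roundingVariance]
  field_simp
  ring

end IsStochasticRounding

theorem integral_dotProduct_mulVec_of_stochasticRounding [IsProbabilityMeasure μ] {ι : Type*}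
    [Fintype ι] {ξ : ι → Ω → ℝ} {h v : ι → ℝ} (hind : iIndepFun ξ μ)
    (hξ : ∀ j, IsStochasticRounding μ (ξ j) (h j) (v j)) (hh : ∀ j, 0 < h j)
    (hv : ∀ j, 0 ≤ v j) (c : ι → ℝ) (A : Matrix ι ι ℝ) :
    ∫ ω, (fun j => c j * (ξ j ω - v j)) ⬝ᵥ A *ᵥ (fun j => c j * (ξ j ω - v j)) ∂μ =
      ∑ j, A j j * (c j ^ 2 * roundingVariance (h j) (v j)) := by
  have hind' : iIndepFun (fun j ω => c j * (ξ j ω - v j)) μ :=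
    hind.comp (fun j t => c j * (t - v j)) fun j => by fun_prop
  simp_rw [hind'.integral_dotProduct_mulVec (fun j => (hξ j).memLp_mul_sub (hh j) (hv j) _)
    (fun j => (hξ j).integral_mul_sub (hh j) (hv j) _),
    fun j => (hξ j).integral_mul_sub_sq (hh j) (hv j)]

theorem integral_dotProduct_mulVec_le_of_stochasticRounding [IsProbabilityMeasure μ] {ι : Type*}
    [Fintype ι] {ξ : ι → Ω → ℝ} {h v : ι → ℝ} (hind : iIndepFun ξ μ)
    (hξ : ∀ j, IsStochasticRounding μ (ξ j) (h j) (v j)) (hh : ∀ j, 0 < h j)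
    (hv : ∀ j, 0 ≤ v j) {c : ι → ℝ} {C : ℝ} (hc : ∀ j, c j ^ 2 ≤ C) {A : Matrix ι ι ℝ}
    (hA : ∀ j, 0 ≤ A j j) :
    ∫ ω, (fun j => c j * (ξ j ω - v j)) ⬝ᵥ A *ᵥ (fun j => c j * (ξ j ω - v j)) ∂μ ≤
      C * ∑ j, A j j * roundingVariance (h j) (v j) :=
  calc _ = ∑ j, A j j * (c j ^ 2 * roundingVariance (h j) (v j)) :=
        integral_dotProduct_mulVec_of_stochasticRounding hind hξ hh hv c A
    _ ≤ ∑ j, A j j * (C * roundingVariance (h j) (v j)) := by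
        gcongr with j
        exacts [hA j, roundingVariance_nonneg (hh j) (hv j), hc j]
    _ = C * ∑ j, A j j * roundingVariance (h j) (v j) := by
        simp_rw [Finset.mul_sum, mul_left_comm]

end

theorem Real.sign_mul_abs (r : ℝ) : Real.sign r * |r| = r := by
  rcases lt_trichotomy r 0 with hr | rfl | hr
  · rw [Real.sign_of_neg hr, abs_of_neg hr, neg_one_mul, neg_neg]
  · rw [abs_zero, mul_zero]
  · rw [Real.sign_of_pos hr, abs_of_pos hr, one_mul]

theorem Real.mul_sign_mul_abs_div {a : ℝ} (ha : a ≠ 0) (r : ℝ) :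
    a * Real.sign r * (|r| / a) = r := by
  rw [mul_right_comm, mul_div_assoc', mul_div_cancel_left₀ _ ha, mul_comm, Real.sign_mul_abs]

theorem Real.sq_mul_sign_le (a r : ℝ) : (a * Real.sign r) ^ 2 ≤ a ^ 2 := by
  rw [mul_pow]
  refine mul_le_of_le_one_right (sq_nonneg a) ?_
  rcases Real.sign_apply_eq r with h | h | h <;> norm_num [h]

theorem sum_sq_abs_div_sqrt_dotProduct_self {ι : Type*} [Fintype ι] {x : ι → ℝ} (hx : x ≠ 0) :
    ∑ j, (|x j| / √(x ⬝ᵥ x)) ^ 2 = 1 := by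
  have hxx : 0 < x ⬝ᵥ x :=
    (dotProduct_self_star_nonneg x).lt_of_ne' (dotProduct_self_eq_zero.not.2 hx)
  simp_rw [div_pow, sq_abs, Real.sq_sqrt hxx.le, ← Finset.sum_div]
  rw [div_eq_one_iff_eq hxx.ne']
  simp [dotProduct, sq]

theorem sum_mul_roundingVariance_le_sqrt {ι : Type*} [Fintype ι] {w h v : ι → ℝ}
    (hw : ∀ j, 0 ≤ w j) (hh : ∀ j, 0 < h j) (hv : ∀ j, 0 ≤ v j) (hv1 : ∑ j, v j ^ 2 = 1) :
    ∑ j, w j * roundingVariance (h j) (v j) ≤ √(∑ j, w j ^ 2 * h j ^ 2) :=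
  calc ∑ j, w j * roundingVariance (h j) (v j)
      ≤ ∑ j, (w j * h j) * v j := Finset.sum_le_sum fun j _ => by
        rw [mul_assoc]
        exact mul_le_mul_of_nonneg_left (roundingVariance_le_mul (hh j) (hv j)) (hw j)
    _ ≤ √(∑ j, (w j * h j) ^ 2) * √(∑ j, v j ^ 2) := Real.sum_mul_le_sqrt_mul_sqrt _ _ _
    _ = √(∑ j, w j ^ 2 * h j ^ 2) := by simp_rw [hv1, Real.sqrt_one, mul_one, mul_pow]

/-- Variance bound for quantization with varying steps: for `x ≠ 0`, steps `h_j > 0`, and the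
random quantization `[Q_h(x)]_j = ‖x‖ · sign(x_j) · ξ_j(|x_j|/‖x‖)` with independent unbiased
stochastic roundings `ξ_j` to the grids `{0, h_j, 2h_j, …}`, and any symmetric positive
semidefinite `L`:
`E‖Q_h(x) - x‖²_L ≤ min(Σ_j L_jj h_j², √(Σ_j L_jj² h_j²)) ‖x‖²`; in particular the bound
`ℒ(Q_h, L) ≤ ‖diag(L) h‖` holds. -/
theorem stmt7 {d : ℕ} {Ω : Type*} [MeasurableSpace Ω] (μ : Measure Ω) [IsProbabilityMeasure μ]
    (x h : Fin d → ℝ) (hx : x ≠ 0) (hh : ∀ j, 0 < h j)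
    (L : Matrix (Fin d) (Fin d) ℝ) (hL : L.PosSemidef)
    (nx : ℝ) (hnx : nx = Real.sqrt (x ⬝ᵥ x))
    (v : Fin d → ℝ) (hv : ∀ j, v j = |x j| / nx)
    (k : Fin d → ℕ) (hk : ∀ j, k j = ⌊v j / h j⌋₊)
    (ξ : Fin d → Ω → ℝ) (hmeas : ∀ j, Measurable (ξ j))
    (hind : iIndepFun ξ μ)
    (hdown : ∀ j, μ {ω | ξ j ω = (k j : ℝ) * h j}
      = ENNReal.ofReal ((k j : ℝ) + 1 - v j / h j))
    (hup : ∀ j, μ {ω | ξ j ω = ((k j : ℝ) + 1) * h j}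
      = ENNReal.ofReal (v j / h j - (k j : ℝ)))
    (Q : Ω → Fin d → ℝ) (hQ : ∀ ω j, Q ω j = nx * Real.sign (x j) * ξ j ω) :
    (∫ ω, (Q ω - x) ⬝ᵥ L.mulVec (Q ω - x) ∂μ)
      ≤ min (∑ j, L j j * (h j) ^ 2) (Real.sqrt (∑ j, (L j j) ^ 2 * (h j) ^ 2)) * (x ⬝ᵥ x)
    ∧ (∫ ω, (Q ω - x) ⬝ᵥ L.mulVec (Q ω - x) ∂μ)
      ≤ Real.sqrt (∑ j, (L j j) ^ 2 * (h j) ^ 2) * (x ⬝ᵥ x) := by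
  obtain rfl : k = fun j => ⌊v j / h j⌋₊ := funext hk
  have hround (j) : IsStochasticRounding μ (ξ j) (h j) (v j) := ⟨hmeas j, hdown j, hup j⟩
  have hxx : 0 < x ⬝ᵥ x :=
    (dotProduct_self_star_nonneg x).lt_of_ne' (dotProduct_self_eq_zero.not.2 hx)
  have hnx0 : 0 < nx := hnx ▸ Real.sqrt_pos.2 hxx
  have hv0 (j) : 0 ≤ v j := hv j ▸ by positivity
  have hQx (ω) : Q ω - x = fun j => nx * Real.sign (x j) * (ξ j ω - v j) := by
    ext j
    rw [Pi.sub_apply, hQ, mul_sub, hv, Real.mul_sign_mul_abs_div hnx0.ne']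
  have hc (j) : (nx * Real.sign (x j)) ^ 2 ≤ x ⬝ᵥ x :=
    (Real.sq_mul_sign_le nx (x j)).trans_eq (by rw [hnx, Real.sq_sqrt hxx.le])
  have hdiag (j) : 0 ≤ L j j := hL.diag_nonneg
  have hI : ∫ ω, (Q ω - x) ⬝ᵥ L.mulVec (Q ω - x) ∂μ ≤
      (x ⬝ᵥ x) * ∑ j, L j j * roundingVariance (h j) (v j) := by
    simp_rw [hQx]
    exact integral_dotProduct_mulVec_le_of_stochasticRounding hind hround hh hv0 hc hdiag
  have hsq : ∑ j, L j j * roundingVariance (h j) (v j) ≤ ∑ j, L j j * h j ^ 2 := by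
    gcongr with j
    exacts [hdiag j, roundingVariance_le_sq (hh j) (hv0 j)]
  have hsqrt := sum_mul_roundingVariance_le_sqrt hdiag hh hv0
    (by simp_rw [hv, hnx]; exact sum_sq_abs_div_sqrt_dotProduct_self hx)
  simp_rw [mul_comm _ (x ⬝ᵥ x)]
  exact ⟨hI.trans (by gcongr; exact le_min hsq hsqrt), hI.trans (by gcongr)⟩
end

section
/- The optimization problem min over h ∈ ℝ^d with h_j > 0 of ‖diag(𝐋)h‖ = √(Σ_j 𝐋_{jj}² h_j²) subject to ‖h^{-1}‖ = √(Σ_j h_j^{-2}) = β has the unique solution h_j = (1/β)√((Σ_t 𝐋_{tt}) / 𝐋_{jj}), and the optimal value equals (1/β) Σ_j 𝐋_{jj}. -/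
/-!
Write `a_j = L_jj > 0`, `S = Σ a_j` and `c = S / β²`. For every feasible `h` one has the
completed-square identity
`Σ a_j² h_j² = (S / β)² + Σ (a_j h_j - c / h_j)²`,
so the objective is at least `S / β`, with equality exactly when `a_j h_j² = c` for all `j`.
Among positive vectors this balance condition singles out `h_j = (1/β) √(S / a_j)`, which is
feasible and attains `S / β`.
-/

open Matrix Finset

section CompletingTheSquare

variable {ι : Type*} [Fintype ι]

theorem sum_sq_mul_sq_eq_sq_add_sum_sq (a h : ι → ℝ) {β : ℝ} (hβ : β ≠ 0)
    (hh : ∀ i, h i ≠ 0) (hcon : ∑ i, (h i)⁻¹ ^ 2 = β ^ 2) :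
    ∑ i, a i ^ 2 * h i ^ 2
      = ((∑ i, a i) / β) ^ 2 + ∑ i, (a i * h i - (∑ i, a i) / β ^ 2 / h i) ^ 2 := by
  set c := (∑ i, a i) / β ^ 2
  have hexpand : ∀ i, (a i * h i - c / h i) ^ 2
      = a i ^ 2 * h i ^ 2 - 2 * c * a i + c ^ 2 * (h i)⁻¹ ^ 2 := by
    intro i
    field_simp [hh i]
    ring
  simp only [hexpand, sum_add_distrib, sum_sub_distrib, ← mul_sum, hcon, c]
  field_simp
  ring

theorem sq_sum_div_le_sum_sq_mul_sq (a h : ι → ℝ) {β : ℝ} (hβ : β ≠ 0)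
    (hh : ∀ i, h i ≠ 0) (hcon : ∑ i, (h i)⁻¹ ^ 2 = β ^ 2) :
    ((∑ i, a i) / β) ^ 2 ≤ ∑ i, a i ^ 2 * h i ^ 2 := by
  rw [sum_sq_mul_sq_eq_sq_add_sum_sq a h hβ hh hcon]
  exact le_add_of_nonneg_right (sum_nonneg fun i _ => sq_nonneg _)

theorem mul_sq_eq_of_sum_sq_mul_sq_eq (a h : ι → ℝ) {β : ℝ} (hβ : β ≠ 0)
    (hh : ∀ i, h i ≠ 0) (hcon : ∑ i, (h i)⁻¹ ^ 2 = β ^ 2)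
    (hopt : ∑ i, a i ^ 2 * h i ^ 2 = ((∑ i, a i) / β) ^ 2) (i : ι) :
    a i * h i ^ 2 = (∑ i, a i) / β ^ 2 := by
  rw [sum_sq_mul_sq_eq_sq_add_sum_sq a h hβ hh hcon, add_eq_left,
    sum_eq_zero_iff_of_nonneg fun i _ => sq_nonneg _] at hopt
  have hi := sub_eq_zero.1 (pow_eq_zero_iff two_ne_zero |>.1 (hopt i (mem_univ i)))
  rw [eq_div_iff (hh i)] at hi
  rw [← hi]
  ring

theorem sum_sq_mul_sq_of_mul_sq_eq (a h : ι → ℝ) {c : ℝ} (hbal : ∀ i, a i * h i ^ 2 = c) :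
    ∑ i, a i ^ 2 * h i ^ 2 = c * ∑ i, a i := by
  rw [mul_sum]
  refine sum_congr rfl fun i _ => ?_
  rw [← hbal i]
  ring

theorem sum_inv_sq_of_mul_sq_eq (a h : ι → ℝ) {c : ℝ} (hc : c ≠ 0)
    (hbal : ∀ i, a i * h i ^ 2 = c) :
    ∑ i, (h i)⁻¹ ^ 2 = (∑ i, a i) / c := by
  rw [sum_div]
  refine sum_congr rfl fun i _ => ?_
  have hai : a i * h i ^ 2 ≠ 0 := hbal i ▸ hc
  rw [← hbal i, inv_pow, div_mul_cancel_left₀ (left_ne_zero_of_mul hai)]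

end CompletingTheSquare

theorem mul_sq_eq_of_eq_inv_mul_sqrt {a s β x : ℝ} (ha : 0 < a) (hs : 0 ≤ s)
    (hx : x = 1 / β * Real.sqrt (s / a)) :
    a * x ^ 2 = s / β ^ 2 := by
  rw [hx, mul_pow, Real.sq_sqrt (div_nonneg hs ha.le)]
  field_simp

/-- The problem `min ‖diag(L)h‖ s.t. ‖h⁻¹‖ = β, h_j > 0` has the unique solution
`h_j = (1/β)√((Σ_t L_tt)/L_jj)` with optimal value `(1/β) Σ_j L_jj`. -/
theorem stmt10 {d : ℕ} (hd : 0 < d) (L : Matrix (Fin d) (Fin d) ℝ) (hL : L.PosDef)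
    (β : ℝ) (hβ : 0 < β)
    (hstar : Fin d → ℝ)
    (hdef : ∀ j, hstar j = (1 / β) * Real.sqrt ((∑ t, L t t) / L j j)) :
    (∀ j, 0 < hstar j)
    ∧ Real.sqrt (∑ j, (hstar j)⁻¹ ^ 2) = β
    ∧ Real.sqrt (∑ j, (L j j) ^ 2 * (hstar j) ^ 2) = (1 / β) * ∑ j, L j j
    ∧ (∀ h : Fin d → ℝ, (∀ j, 0 < h j) → Real.sqrt (∑ j, (h j)⁻¹ ^ 2) = β →
        Real.sqrt (∑ j, (L j j) ^ 2 * (hstar j) ^ 2)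
          ≤ Real.sqrt (∑ j, (L j j) ^ 2 * (h j) ^ 2))
    ∧ (∀ h : Fin d → ℝ, (∀ j, 0 < h j) → Real.sqrt (∑ j, (h j)⁻¹ ^ 2) = β →
        Real.sqrt (∑ j, (L j j) ^ 2 * (h j) ^ 2)
          = Real.sqrt (∑ j, (L j j) ^ 2 * (hstar j) ^ 2) → h = hstar) := by
  have ha : ∀ j, 0 < L j j := fun j => hL.diag_pos
  have : Nonempty (Fin d) := Fin.pos_iff_nonempty.mp hd
  set S := ∑ t, L t t
  have hS : 0 < S := sum_pos (fun j _ => ha j) univ_nonempty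
  have hpos : ∀ j, 0 < hstar j := fun j => by
    rw [hdef j]
    exact mul_pos (by positivity) (Real.sqrt_pos.2 (div_pos hS (ha j)))
  have hbal : ∀ j, L j j * hstar j ^ 2 = S / β ^ 2 := fun j =>
    mul_sq_eq_of_eq_inv_mul_sqrt (ha j) hS.le (hdef j)
  have hcon : ∑ j, (hstar j)⁻¹ ^ 2 = β ^ 2 := by
    rw [sum_inv_sq_of_mul_sq_eq _ _ (by positivity) hbal]
    exact div_div_cancel₀ hS.ne'
  have hobj : ∑ j, L j j ^ 2 * hstar j ^ 2 = (S / β) ^ 2 := by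
    rw [sum_sq_mul_sq_of_mul_sq_eq _ _ hbal]
    ring
  have hfeas : ∀ h : Fin d → ℝ, Real.sqrt (∑ j, (h j)⁻¹ ^ 2) = β → ∑ j, (h j)⁻¹ ^ 2 = β ^ 2 :=
    fun h hc => (Real.sqrt_eq_iff_eq_sq (sum_nonneg fun _ _ => sq_nonneg _) hβ.le).1 hc
  refine ⟨hpos, by rw [hcon, Real.sqrt_sq hβ.le], ?_, ?_, ?_⟩
  · rw [hobj, Real.sqrt_sq (by positivity)]
    ring
  · intro h hh hc
    rw [hobj]
    exact Real.sqrt_le_sqrt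
      (sq_sum_div_le_sum_sq_mul_sq _ h hβ.ne' (fun j => (hh j).ne') (hfeas h hc))
  · intro h hh hc heq
    rw [hobj, Real.sqrt_inj (sum_nonneg fun _ _ => by positivity) (by positivity)] at heq
    funext j
    have hj := mul_sq_eq_of_sum_sq_mul_sq_eq _ h hβ.ne' (fun j => (hh j).ne') (hfeas h hc) heq j
    rw [← hbal j] at hj
    exact (pow_left_inj₀ (hh j).le (hpos j).le two_ne_zero).1 (mul_left_cancel₀ (ha j).ne' hj)
end

section
/- Let 𝒞 be an unbiased compressor on ℝ^d (E[𝒞(z)] = z for all z), 𝐋 ⪰ 0 symmetric positive semidefinite, and g ∈ range(𝐋). Then E[𝐋^{1/2} 𝒞(𝐋^{†1/2} g)] = g, and E[‖𝐋^{1/2} 𝒞(𝐋^{†1/2} g) − g‖²] ≤ ℒ(𝒞, 𝐋) · ‖g‖²_{𝐋^†}, where ℒ(𝒞, 𝐋) satisfies E[‖𝒞(z) − z‖²_𝐋] ≤ ℒ(𝒞, 𝐋)‖z‖² for all z. -/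
/-!
`𝐋^{1/2} 𝐋^{†1/2}` is the orthogonal projection onto `range 𝐋`: the four matrices commute (`𝐋` and
`𝐋^†` do because `𝐋 𝐋^†` is symmetric, and a square root commutes with whatever commutes with
its square), so this product is a nonnegative square root of the projection `𝐋 𝐋^†`, hence
equal to it. Thus `𝐋^{1/2} 𝐋^{†1/2} g = g` for `g ∈ range 𝐋`, and with `z = 𝐋^{†1/2} g` both claims
are the unbiasedness of `𝒞` and the variance bound at `z`, transported by `𝐋^{1/2}`, for which
`‖𝐋^{1/2} u‖² = ‖u‖²_𝐋` and `‖z‖² = ‖g‖²_{𝐋^†}`.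
-/

open Matrix MeasureTheory

/-- Moore–Penrose pseudoinverse conditions for real matrices. -/
def IsMP {d : ℕ} (L Lp : Matrix (Fin d) (Fin d) ℝ) : Prop :=
  L * Lp * L = L ∧ Lp * L * Lp = Lp ∧ (L * Lp)ᵀ = L * Lp ∧ (Lp * L)ᵀ = Lp * L

theorem Matrix.integral_mulVec {m n Ω : Type*} [Fintype m] [Fintype n] [MeasurableSpace Ω]
    {μ : Measure Ω} (A : Matrix m n ℝ) {f : Ω → n → ℝ} (hf : Integrable f μ) :
    ∫ ω, A *ᵥ f ω ∂μ = A *ᵥ ∫ ω, f ω ∂μ :=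
  (LinearMap.toContinuousLinearMap A.mulVecLin).integral_comp_comm hf

theorem Matrix.IsSymm.mulVec_dotProduct_mulVec {n R : Type*} [Fintype n] [CommSemiring R]
    {A : Matrix n n R} (hA : A.IsSymm) (u v : n → R) :
    A *ᵥ u ⬝ᵥ A *ᵥ v = u ⬝ᵥ (A * A) *ᵥ v := by
  rw [← mulVec_mulVec, dotProduct_mulVec u, ← mulVec_transpose, hA.eq]

theorem Matrix.PosSemidef.isSymm {n R : Type*} [Fintype n] [CommRing R] [PartialOrder R]
    [StarRing R] [TrivialStar R] {A : Matrix n n R} (hA : A.PosSemidef) : A.IsSymm :=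
  isHermitian_iff_isSymm.mp hA.1

section SquareRoot

open scoped MatrixOrder

theorem Matrix.PosSemidef.commute_of_commute_mul_self {n : Type*} [Fintype n] [DecidableEq n]
    {A B : Matrix n n ℝ} (hA : A.PosSemidef) (h : Commute (A * A) B) : Commute A B := by
  rw [← CFC.sqrt_mul_self A hA.nonneg, CFC.sqrt_eq_cfc]
  exact h.cfc_nnreal _

variable {d : ℕ} {L Lp Lh Lph : Matrix (Fin d) (Fin d) ℝ}

theorem IsMP.commute (hLp : IsMP L Lp) (hL : L.IsSymm) (hLp' : Lp.IsSymm) : Commute L Lp := by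
  have h := hLp.2.2.1
  rw [transpose_mul, hL.eq, hLp'.eq] at h
  exact h.symm

theorem IsMP.isStarProjection_mul (hLp : IsMP L Lp) : IsStarProjection (L * Lp) := by
  refine ⟨?_, ?_⟩
  · change L * Lp * (L * Lp) = L * Lp
    rw [← mul_assoc, hLp.1]
  · rw [IsSelfAdjoint, star_eq_conjTranspose, conjTranspose_eq_transpose_of_trivial, hLp.2.2.1]

theorem IsMP.sqrt_mul_sqrt_eq_mul (hLh : Lh.PosSemidef ∧ Lh * Lh = L) (hLp : IsMP L Lp)
    (hLph : Lph.PosSemidef ∧ Lph * Lph = Lp) : Lh * Lph = L * Lp := by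
  obtain ⟨hLh, rfl⟩ := hLh
  obtain ⟨hLph, rfl⟩ := hLph
  have hcomm : Commute Lh Lph := by
    have h := hLp.commute (sq Lh ▸ hLh.isSymm.pow 2) (sq Lph ▸ hLph.isSymm.pow 2)
    exact (hLph.commute_of_commute_mul_self (hLh.commute_of_commute_mul_self h).symm).symm
  have hP := hLp.isStarProjection_mul
  refine (CFC.mul_self_eq_mul_self_iff _ _ (hcomm.mul_nonneg hLh.nonneg hLph.nonneg)
    hP.nonneg).mp ?_
  rw [hP.isIdempotentElem.eq, hcomm.symm.mul_mul_mul_comm]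

end SquareRoot

theorem stmt17_general {d : ℕ} {Ω : Type*} [MeasurableSpace Ω] (μ : Measure Ω)
    (C : Ω → (Fin d → ℝ) → Fin d → ℝ)
    (hCint : ∀ z : Fin d → ℝ, Integrable (fun ω => C ω z) μ)
    (hunb : ∀ z : Fin d → ℝ, ∫ ω, C ω z ∂μ = z)
    (L Lp Lh Lph : Matrix (Fin d) (Fin d) ℝ)
    (hLh : Lh.PosSemidef ∧ Lh * Lh = L)
    (hLp : IsMP L Lp)
    (hLph : Lph.PosSemidef ∧ Lph * Lph = Lp)
    (ℒcal : ℝ)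
    (hvar : ∀ z : Fin d → ℝ, ∫ ω, (C ω z - z) ⬝ᵥ L.mulVec (C ω z - z) ∂μ ≤ ℒcal * (z ⬝ᵥ z))
    (g : Fin d → ℝ) (hg : ∃ r, g = L.mulVec r) :
    (∫ ω, Lh.mulVec (C ω (Lph.mulVec g)) ∂μ) = g
    ∧ ∫ ω, (Lh.mulVec (C ω (Lph.mulVec g)) - g) ⬝ᵥ (Lh.mulVec (C ω (Lph.mulVec g)) - g) ∂μ
        ≤ ℒcal * (g ⬝ᵥ Lp.mulVec g) := by
  obtain ⟨r, hr⟩ := hg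
  have hz : Lh *ᵥ (Lph *ᵥ g) = g := by
    rw [mulVec_mulVec, hLp.sqrt_mul_sqrt_eq_mul hLh hLph, hr, mulVec_mulVec, hLp.1]
  set z := Lph *ᵥ g
  refine ⟨by rw [integral_mulVec Lh (hCint z), hunb z, hz], ?_⟩
  calc ∫ ω, (Lh *ᵥ C ω z - g) ⬝ᵥ (Lh *ᵥ C ω z - g) ∂μ
      = ∫ ω, (C ω z - z) ⬝ᵥ L *ᵥ (C ω z - z) ∂μ := by
        refine integral_congr_ae (Filter.Eventually.of_forall fun ω => ?_)
        dsimp only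
        rw [← hz, ← mulVec_sub, hLh.1.isSymm.mulVec_dotProduct_mulVec, hLh.2]
    _ ≤ ℒcal * (z ⬝ᵥ z) := hvar z
    _ = ℒcal * (g ⬝ᵥ Lp *ᵥ g) := by rw [hLph.1.isSymm.mulVec_dotProduct_mulVec, hLph.2]

/-- For an unbiased compressor `C`, `L ⪰ 0` and `g ∈ range(L)`:
`E[L^{1/2} C(L^{†1/2} g)] = g` and
`E‖L^{1/2} C(L^{†1/2} g) - g‖² ≤ ℒ(C, L) ‖g‖²_{L^†}`,
where `ℒcal` satisfies `E‖C(z) - z‖²_L ≤ ℒcal ‖z‖²` for all `z`. -/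
theorem stmt17 {d : ℕ} {Ω : Type*} [MeasurableSpace Ω] (μ : Measure Ω)
    [IsProbabilityMeasure μ]
    (C : Ω → (Fin d → ℝ) → Fin d → ℝ)
    (hCint : ∀ z : Fin d → ℝ, Integrable (fun ω => C ω z) μ)
    (hunb : ∀ z : Fin d → ℝ, ∫ ω, C ω z ∂μ = z)
    (L Lp Lh Lph : Matrix (Fin d) (Fin d) ℝ)
    (hL : L.PosSemidef)
    (hLh : Lh.PosSemidef ∧ Lh * Lh = L)
    (hLp : IsMP L Lp)
    (hLph : Lph.PosSemidef ∧ Lph * Lph = Lp)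
    (ℒcal : ℝ)
    (hvar : ∀ z : Fin d → ℝ, ∫ ω, (C ω z - z) ⬝ᵥ L.mulVec (C ω z - z) ∂μ ≤ ℒcal * (z ⬝ᵥ z))
    (g : Fin d → ℝ) (hg : ∃ r, g = L.mulVec r) :
    (∫ ω, Lh.mulVec (C ω (Lph.mulVec g)) ∂μ) = g
    ∧ ∫ ω, (Lh.mulVec (C ω (Lph.mulVec g)) - g) ⬝ᵥ (Lh.mulVec (C ω (Lph.mulVec g)) - g) ∂μ
        ≤ ℒcal * (g ⬝ᵥ Lp.mulVec g) :=
  stmt17_general μ C hCint hunb L Lp Lh Lph hLh hLp hLph ℒcal hvar g hg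
end

section
/- Let f_i be convex and 𝐋_i-smooth with ∇f_i(x) ∈ range(𝐋_i) for all x. Then for all x, y: ‖∇f_i(x) − ∇f_i(y)‖²_{𝐋_i^†} ≤ 2 D_{f_i}(x, y), where D_{f_i}(x, y) = f_i(x) − f_i(y) − ⟨∇f_i(y), x − y⟩ is the Bregman divergence. -/
/-!
Put `v = ∇f(x) - ∇f(y)` and take one pseudoinverse-preconditioned step `z = x - 𝐋^† v`.
Smoothness bounds `f z` above by `f x - ⟨∇f(x), 𝐋^† v⟩ + ½‖v‖²_{𝐋^†}` (using `𝐋 𝐋^† v = v`,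
which holds because `v ∈ range 𝐋`), and convexity bounds it below by
`f y + ⟨∇f(y), z - y⟩`; comparing the two bounds gives `½‖v‖²_{𝐋^†} ≤ D_f(x, y)`.
-/

open Matrix

theorem ConvexOn.add_le_of_hasFDerivAt {E : Type*} [NormedAddCommGroup E] [NormedSpace ℝ E]
    {s : Set E} {f : E → ℝ} {f' : E →L[ℝ] ℝ} {x y : E} (hf : ConvexOn ℝ s f)
    (hx : x ∈ s) (hy : y ∈ s) (hf' : HasFDerivAt f f' y) :
    f y + f' (x - y) ≤ f x := by
  let ℓ : ℝ →ᵃ[ℝ] E := AffineMap.lineMap y x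
  have hline : HasDerivAt (fun t : ℝ => f (ℓ t)) (f' (x - y)) 0 :=
    hf'.comp_hasDerivAt_of_eq 0 AffineMap.hasDerivAt_lineMap
      (AffineMap.lineMap_apply_zero y x).symm
  have hslope := (hf.comp_affineMap ℓ).le_slope_of_hasDerivAt
    (by simpa [ℓ] using hy) (by simpa [ℓ] using hx) zero_lt_one hline
  simp only [slope, Function.comp_apply, ℓ, AffineMap.lineMap_apply_zero,
    AffineMap.lineMap_apply_one, sub_zero, inv_one, smul_eq_mul, one_mul, vsub_eq_sub] at hslope
  linarith

theorem Matrix.mulVec_mulVec_mulVec_of_mul_mul_eq {m n R : Type*} [Fintype m] [Fintype n]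
    [NonUnitalSemiring R] {L : Matrix m n R} {Lp : Matrix n m R} (h : L * Lp * L = L)
    (r : n → R) : L *ᵥ (Lp *ᵥ (L *ᵥ r)) = L *ᵥ r := by
  rw [mulVec_mulVec, mulVec_mulVec, h]

theorem dotProduct_sub_half_le_bregman {d : ℕ} {f : (Fin d → ℝ) → ℝ}
    {g : (Fin d → ℝ) → Fin d → ℝ} {L : Matrix (Fin d) (Fin d) ℝ}
    (hsm : ∀ x y, f x ≤ f y + g y ⬝ᵥ (x - y) + (1 / 2) * ((x - y) ⬝ᵥ L *ᵥ (x - y)))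
    (x : Fin d → ℝ) {y : Fin d → ℝ} (hlower : ∀ z, f y + g y ⬝ᵥ (z - y) ≤ f z)
    (w : Fin d → ℝ) :
    (g x - g y) ⬝ᵥ w - (1 / 2) * (w ⬝ᵥ L *ᵥ w) ≤ f x - f y - g y ⬝ᵥ (x - y) := by
  have hupper := hsm (x - w) x
  have hbelow := hlower (x - w)
  have hstep : x - w - x = -w := by abel
  simp only [hstep, neg_dotProduct, mulVec_neg, dotProduct_neg, neg_neg] at hupper
  rw [sub_right_comm, dotProduct_sub] at hbelow
  rw [sub_dotProduct]
  linarith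

theorem stmt18_general {d : ℕ} (f : (Fin d → ℝ) → ℝ) (g : (Fin d → ℝ) → Fin d → ℝ)
    (hdiff : Differentiable ℝ f)
    (hgrad : ∀ x u, fderiv ℝ f x u = g x ⬝ᵥ u)
    (hconv : ConvexOn ℝ Set.univ f)
    (L Lp : Matrix (Fin d) (Fin d) ℝ) (hLp : IsMP L Lp)
    (hsm : ∀ x y, f x ≤ f y + g y ⬝ᵥ (x - y) + (1 / 2) * ((x - y) ⬝ᵥ L.mulVec (x - y)))
    (hrange : ∀ x, ∃ r, g x = L.mulVec r) :
    ∀ x y, (g x - g y) ⬝ᵥ Lp.mulVec (g x - g y)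
      ≤ 2 * (f x - f y - g y ⬝ᵥ (x - y)) := by
  intro x y
  have hlower : ∀ z, f y + g y ⬝ᵥ (z - y) ≤ f z := fun z => by
    simpa only [hgrad] using
      hconv.add_le_of_hasFDerivAt (Set.mem_univ z) (Set.mem_univ y) (hdiff y).hasFDerivAt
  obtain ⟨r, hr⟩ : ∃ r, g x - g y = L *ᵥ r := by
    obtain ⟨rx, hrx⟩ := hrange x
    obtain ⟨ry, hry⟩ := hrange y
    exact ⟨rx - ry, by rw [hrx, hry, mulVec_sub]⟩
  have hquad : Lp *ᵥ (g x - g y) ⬝ᵥ L *ᵥ (Lp *ᵥ (g x - g y))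
      = (g x - g y) ⬝ᵥ Lp *ᵥ (g x - g y) := by
    rw [hr, mulVec_mulVec_mulVec_of_mul_mul_eq hLp.1, dotProduct_comm]
  have hbound := dotProduct_sub_half_le_bregman hsm x hlower (Lp *ᵥ (g x - g y))
  rw [hquad] at hbound
  linarith

/-- If `f` is convex and `L`-smooth (matrix sense, with gradient `g`), and `∇f(x) ∈ range(L)`
for all `x`, then `‖∇f(x) - ∇f(y)‖²_{L^†} ≤ 2 D_f(x, y)`. -/
theorem stmt18 {d : ℕ} (f : (Fin d → ℝ) → ℝ) (g : (Fin d → ℝ) → Fin d → ℝ)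
    (hdiff : Differentiable ℝ f)
    (hgrad : ∀ x u, fderiv ℝ f x u = g x ⬝ᵥ u)
    (hconv : ConvexOn ℝ Set.univ f)
    (L Lp : Matrix (Fin d) (Fin d) ℝ) (hL : L.PosSemidef) (hLp : IsMP L Lp)
    (hsm : ∀ x y, f x ≤ f y + g y ⬝ᵥ (x - y) + (1 / 2) * ((x - y) ⬝ᵥ L.mulVec (x - y)))
    (hrange : ∀ x, ∃ r, g x = L.mulVec r) :
    ∀ x y, (g x - g y) ⬝ᵥ Lp.mulVec (g x - g y)
      ≤ 2 * (f x - f y - g y ⬝ᵥ (x - y)) :=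
  stmt18_general f g hdiff hgrad hconv L Lp hLp hsm hrange
end
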